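/- Let F be a field of characteristic 2, let q be a totally singular quadratic form over F on a finite-dimensional F-vector space which is not a zero form (i.e. q(x) ≠ 0 for some x), let L/F be a finite field extension, and let λ ∈ L* be such that q_L ≅ λ·q_L over L. Then F(λ)/F is separable or L/F(λ) is not separable. -/

import Mathlib

/-!
Since `q` is totally singular, so is `q_L`, hence `q_L` is additive and all its values lie in
`F(L²)`. Comparing `q_L` and `λ q_L` at a vector `1 ⊗ x` with `q x ≠ 0` shows `λ ∈ F(L²)`.
If `L/F(λ)` is separable then `L = F(λ)(L²) = F(L²)`, and a finite extension generated over `F`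
by its squares is separable: over the separable closure `S` it is purely inseparable, and iterating
gives `L = S(L^{2^e}) = S`, where `e` is the exponent of `L/S`.
-/

open scoped TensorProduct

/-- `Q` is the scalar extension of the quadratic form `q` to `L`: it satisfies
`Q (c ⊗ x) = c² ⬝ q x` and its polar form is the base change of the polar form of `q`
(a bilinear form is determined by its values on pure tensors). -/
def IsScalarExt (F : Type*) {L : Type*} [Field F] [Field L] [Algebra F L]
    {V : Type*} [AddCommGroup V] [Module F V]
    (q : QuadraticForm F V) (Q : QuadraticForm L (L ⊗[F] V)) : Prop :=
  (∀ (c : L) (x : V), Q (c ⊗ₜ[F] x) = c ^ 2 * algebraMap F L (q x)) ∧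
  ∀ (c d : L) (x y : V),
    QuadraticMap.polar (⇑Q) (c ⊗ₜ[F] x) (d ⊗ₜ[F] y) =
      c * d * algebraMap F L (QuadraticMap.polar (⇑q) x y)

open IntermediateField

section PowerGenerated

variable {K L : Type*} [Field K] [Field L] [Algebra K L] (p : ℕ) [ExpChar K p]

theorem IntermediateField.adjoin_range_pow_eq_top_of_isSeparable [Algebra.IsSeparable K L] :
    adjoin K (Set.range (· ^ p : L → L)) = ⊤ := by
  rw [← Set.image_univ, ← adjoin_eq_adjoin_pow_expChar_of_isSeparable', adjoin_univ]

theorem IntermediateField.pow_mem_adjoin_range_pow_pow_succ {n : ℕ} {y : L}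
    (hy : y ∈ adjoin K (Set.range (· ^ p ^ n : L → L))) :
    y ^ p ∈ adjoin K (Set.range (· ^ p ^ (n + 1) : L → L)) := by
  have : ExpChar L p := expChar_of_injective_algebraMap (algebraMap K L).injective p
  induction hy using IntermediateField.adjoin_induction with
  | mem x hx =>
    obtain ⟨z, rfl⟩ := hx
    exact subset_adjoin K _ ⟨z, by simp only [← pow_mul, pow_succ]⟩
  | algebraMap r => rw [← map_pow]; exact IntermediateField.algebraMap_mem _ _
  | add a b _ _ ha hb => rw [add_pow_expChar]; exact add_mem ha hb
  | inv a _ ha => rw [inv_pow]; exact inv_mem ha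
  | mul a b _ _ ha hb => rw [mul_pow]; exact mul_mem ha hb

theorem IntermediateField.adjoin_range_pow_pow_eq_top
    (h : adjoin K (Set.range (· ^ p : L → L)) = ⊤) (n : ℕ) :
    adjoin K (Set.range (· ^ p ^ n : L → L)) = ⊤ := by
  induction n with
  | zero => simp
  | succ n ih =>
    rw [eq_top_iff, ← h, adjoin_le_iff]
    rintro _ ⟨y, rfl⟩
    exact pow_mem_adjoin_range_pow_pow_succ p (ih ▸ mem_top)

theorem IsPurelyInseparable.bot_eq_top_of_adjoin_range_pow_eq_top [FiniteDimensional K L]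
    [IsPurelyInseparable K L] (h : adjoin K (Set.range (· ^ p : L → L)) = ⊤) :
    (⊥ : IntermediateField K L) = ⊤ := by
  rw [← adjoin_range_pow_pow_eq_top p h (IsPurelyInseparable.exponent K L), eq_comm,
    eq_bot_iff, adjoin_le_iff]
  rintro _ ⟨a, rfl⟩
  exact mem_bot.2 (IsPurelyInseparable.exponent_def' K p a)

end PowerGenerated

section SeparableCriterion

variable {F L : Type*} [Field F] [Field L] [Algebra F L] [FiniteDimensional F L]
  (p : ℕ) [ExpChar F p]

theorem IntermediateField.isSeparable_of_adjoin_range_pow_eq_top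
    (h : adjoin F (Set.range (· ^ p : L → L)) = ⊤) : Algebra.IsSeparable F L := by
  set S := separableClosure F L
  have : ExpChar S p := expChar_of_injective_algebraMap (algebraMap F S).injective p
  have hS : adjoin S (Set.range (· ^ p : L → L)) = ⊤ := by
    rw [← restrictScalars_eq_top_iff (K := F), restrictScalars_adjoin, eq_top_iff, ← h]
    exact adjoin.mono _ _ _ Set.subset_union_right
  have hbot := IsPurelyInseparable.bot_eq_top_of_adjoin_range_pow_eq_top p hS
  refine (separableClosure.eq_top_iff F L).1 (eq_top_iff.2 fun x _ => ?_)
  obtain ⟨y, rfl⟩ := mem_bot.1 (hbot ▸ mem_top : x ∈ (⊥ : IntermediateField S L))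
  exact y.2

theorem IntermediateField.isSeparable_of_mem_adjoin_range_pow {lam : L}
    (hlam : lam ∈ adjoin F (Set.range (· ^ p : L → L)))
    [Algebra.IsSeparable F⟮lam⟯ L] : Algebra.IsSeparable F L := by
  have : ExpChar F⟮lam⟯ p := expChar_of_injective_algebraMap (algebraMap F F⟮lam⟯).injective p
  refine isSeparable_of_adjoin_range_pow_eq_top p ?_
  have h := congrArg (restrictScalars F)
    (adjoin_range_pow_eq_top_of_isSeparable (K := F⟮lam⟯) (L := L) p)
  rw [adjoin_adjoin_left, restrictScalars_top] at h
  rw [← h, Set.singleton_union, ← adjoin_insert_adjoin, Set.insert_eq_of_mem hlam, adjoin_self]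

end SeparableCriterion

namespace IsScalarExt

variable {F L V : Type*} [Field F] [Field L] [Algebra F L] [AddCommGroup V] [Module F V]
  {q : QuadraticForm F V} {Q : QuadraticForm L (L ⊗[F] V)}

theorem polar_eq_zero (hQ : IsScalarExt F q Q) (hts : ∀ x y, QuadraticMap.polar q x y = 0)
    (z w : L ⊗[F] V) : QuadraticMap.polar Q z w = 0 := by
  induction z using TensorProduct.induction_on with
  | zero => exact QuadraticMap.polar_zero_left _ _
  | tmul c x =>
    induction w using TensorProduct.induction_on with
    | zero => exact QuadraticMap.polar_zero_right _ _
    | tmul d y => rw [hQ.2 c d x y, hts x y, map_zero, mul_zero]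
    | add w₁ w₂ h₁ h₂ => rw [QuadraticMap.polar_add_right, h₁, h₂, add_zero]
  | add z₁ z₂ h₁ h₂ => rw [QuadraticMap.polar_add_left, h₁, h₂, add_zero]

theorem apply_mem_adjoin_range_sq (hQ : IsScalarExt F q Q)
    (hts : ∀ x y, QuadraticMap.polar q x y = 0) (z : L ⊗[F] V) :
    Q z ∈ adjoin F (Set.range (· ^ 2 : L → L)) := by
  induction z using TensorProduct.induction_on with
  | zero => rw [map_zero]; exact zero_mem _
  | tmul c x =>
    rw [hQ.1 c x]
    exact mul_mem (subset_adjoin F _ ⟨c, rfl⟩) (IntermediateField.algebraMap_mem _ _)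
  | add z₁ z₂ h₁ h₂ =>
    have hadd := hQ.polar_eq_zero hts z₁ z₂
    rw [QuadraticMap.polar, sub_sub, sub_eq_zero] at hadd
    rw [hadd]
    exact add_mem h₁ h₂

theorem similarityFactor_mem_adjoin_range_sq (hQ : IsScalarExt F q Q)
    (hts : ∀ x y, QuadraticMap.polar q x y = 0) (hnz : ∃ x, q x ≠ 0) {lam : L}
    (e : (L ⊗[F] V) ≃ₗ[L] (L ⊗[F] V)) (he : ∀ z, (lam • Q) (e z) = Q z) :
    lam ∈ adjoin F (Set.range (· ^ 2 : L → L)) := by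
  obtain ⟨x, hx⟩ := hnz
  have hprod : lam * Q (e (1 ⊗ₜ x)) = algebraMap F L (q x) := by
    rw [← smul_eq_mul, ← smul_apply, he, hQ.1, one_pow, one_mul]
  have hne : Q (e (1 ⊗ₜ x)) ≠ 0 := right_ne_zero_of_mul (hprod ▸ (map_ne_zero _).2 hx)
  rw [← mul_div_cancel_right₀ lam hne, hprod]
  exact div_mem (IntermediateField.algebraMap_mem _ _) (hQ.apply_mem_adjoin_range_sq hts _)

end IsScalarExt

theorem stmt_17_general {F L : Type*} [Field F] [CharP F 2] [Field L] [Algebra F L]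
    [FiniteDimensional F L]
    {V : Type*} [AddCommGroup V] [Module F V]
    (q : QuadraticForm F V)
    (hts : ∀ x y : V, QuadraticMap.polar (⇑q) x y = 0)
    (hnz : ∃ x : V, q x ≠ 0)
    (Q : QuadraticForm L (L ⊗[F] V)) (hQ : IsScalarExt F q Q)
    (lam : L)
    (hsim : ∃ e : (L ⊗[F] V) ≃ₗ[L] (L ⊗[F] V), ∀ z, (lam • Q) (e z) = Q z) :
    Algebra.IsSeparable F (IntermediateField.adjoin F {lam}) ∨
      ¬ Algebra.IsSeparable (IntermediateField.adjoin F {lam}) L := by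
  rw [or_iff_not_imp_right, not_not]
  intro hsep
  obtain ⟨e, he⟩ := hsim
  have : Algebra.IsSeparable F L := IntermediateField.isSeparable_of_mem_adjoin_range_pow 2
    (hQ.similarityFactor_mem_adjoin_range_sq hts hnz e he)
  exact Algebra.isSeparable_tower_bot_of_isSeparable F F⟮lam⟯ L

/-- if `λ ∈ L*` is a similarity factor over a finite extension `L/F` of a
nonzero totally singular quadratic form defined over `F` (char 2), then `F(λ)/F` is
separable or `L/F(λ)` is not separable. -/
theorem stmt_17 {F L : Type*} [Field F] [CharP F 2] [Field L] [Algebra F L]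
    [FiniteDimensional F L]
    {V : Type*} [AddCommGroup V] [Module F V] [FiniteDimensional F V]
    (q : QuadraticForm F V)
    (hts : ∀ x y : V, QuadraticMap.polar (⇑q) x y = 0)
    (hnz : ∃ x : V, q x ≠ 0)
    (Q : QuadraticForm L (L ⊗[F] V)) (hQ : IsScalarExt F q Q)
    (lam : L) (hlam : lam ≠ 0)
    (hsim : ∃ e : (L ⊗[F] V) ≃ₗ[L] (L ⊗[F] V), ∀ z, (lam • Q) (e z) = Q z) :
    Algebra.IsSeparable F (IntermediateField.adjoin F {lam}) ∨
      ¬ Algebra.IsSeparable (IntermediateField.adjoin F {lam}) L :=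
  stmt_17_general q hts hnz Q hQ lam hsim
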